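/- arXiv:1605.03456 — 4 statements merged into one kernel-verified Lean document; each statement's English description precedes it below -/
import Mathlib

section
/- Let X be a real topological vector space, D ⊆ X a nonempty set and φ : X → EReal considered only on D. If φ is affine (i.e. D, epi φ and hypo φ are all convex sets) and φ is continuous on D (ContinuousOn φ D), then either φ is constant on D (there is c ∈ EReal with φ(x) = c for all x ∈ D) or φ is finite-valued on D (for all x ∈ D, φ(x) ≠ −∞ and φ(x) ≠ +∞). -/
/-!
If `φ x = ⊤`, the convex hypograph contains the whole vertical line over `x`; combining it with a
point `(y, r)` of the hypograph shows that `φ = ⊤` on the open segment from `y` to `x`, and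
continuity carries this to `y`. So a value `⊤` spreads to every point where `φ ≠ ⊥`; and `φ` cannot
take both infinite values, since the intermediate value theorem would give a point of the segment
where `φ = 0`. Replacing `φ` by `-φ` exchanges epigraph and hypograph, which handles `⊥`.
-/

open Set

section

variable {X : Type*} [AddCommGroup X] [Module ℝ X]

def epigraphOn (D : Set X) (φ : X → EReal) : Set (X × ℝ) :=
  {p | p.1 ∈ D ∧ φ p.1 ≤ (p.2 : EReal)}

def hypographOn (D : Set X) (φ : X → EReal) : Set (X × ℝ) :=
  {p | p.1 ∈ D ∧ (p.2 : EReal) ≤ φ p.1}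

variable {D : Set X} {φ : X → EReal}

theorem convex_hypographOn_neg (h : Convex ℝ (epigraphOn D φ)) :
    Convex ℝ (hypographOn D (-φ)) := by
  have hpre : hypographOn D (-φ) =
      (LinearMap.id (R := ℝ) (M := X)).prodMap (-LinearMap.id) ⁻¹' epigraphOn D φ := by
    ext ⟨x, t⟩
    simp [hypographOn, epigraphOn, EReal.le_neg]
  rw [hpre]
  exact h.linear_preimage _

theorem eq_top_on_openSegment_of_convex_hypographOn (hhypo : Convex ℝ (hypographOn D φ))
    {x y : X} {r : ℝ} (hx : x ∈ D) (hx_top : φ x = ⊤)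
    (hy : (y, r) ∈ hypographOn D φ) : ∀ z ∈ openSegment ℝ y x, φ z = ⊤ := by
  rintro z ⟨a, b, ha, hb, hab, rfl⟩
  refine (EReal.eq_top_iff_forall_lt _).2 fun c => ?_
  have hmem := hhypo hy (y := (x, (c + 1 - a * r) / b)) ⟨hx, by simp [hx_top]⟩ ha.le hb.le hab
  have hsum : a * r + b * ((c + 1 - a * r) / b) = c + 1 := by field_simp; ring
  refine (EReal.coe_lt_coe_iff.mpr (lt_add_one c)).trans_le ?_
  simpa [hsum] using hmem.2

variable [TopologicalSpace X] [ContinuousAdd X] [ContinuousSMul ℝ X]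

theorem eq_top_of_convex_hypographOn_of_ne_bot (hD : Convex ℝ D)
    (hhypo : Convex ℝ (hypographOn D φ)) (hcont : ContinuousOn φ D) {x y : X} (hx : x ∈ D)
    (hx_top : φ x = ⊤) (hy : y ∈ D) (hy_bot : φ y ≠ ⊥) : φ y = ⊤ := by
  obtain ⟨r, -, hr⟩ := EReal.lt_iff_exists_real_btwn.1 (bot_lt_iff_ne_bot.2 hy_bot)
  have hseg := hD.segment_subset hy hx
  have hopen := eq_top_on_openSegment_of_convex_hypographOn hhypo hx hx_top ⟨hy, hr.le⟩
  exact EqOn.of_subset_closure (g := fun _ => ⊤) hopen (hcont.mono hseg) continuousOn_const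
    (openSegment_subset_segment ℝ y x) segment_subset_closure_openSegment
    (left_mem_segment ℝ y x)

theorem ne_bot_of_convex_hypographOn (hD : Convex ℝ D) (hhypo : Convex ℝ (hypographOn D φ))
    (hcont : ContinuousOn φ D) {x y : X} (hx : x ∈ D) (hx_top : φ x = ⊤) (hy : y ∈ D) :
    φ y ≠ ⊥ := by
  intro hy_bot
  have hseg := hD.segment_subset hy hx
  obtain ⟨z, hz, hz0⟩ := (convex_segment y x).isPreconnected.intermediate_value
    (left_mem_segment ℝ y x) (right_mem_segment ℝ y x) (hcont.mono hseg)
    (show (0 : EReal) ∈ Icc (φ y) (φ x) by simp [hy_bot, hx_top])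
  have hz_top := eq_top_of_convex_hypographOn_of_ne_bot hD hhypo hcont hx hx_top (hseg hz)
    (by simp [hz0])
  simp [hz0] at hz_top

theorem eq_top_of_convex_hypographOn (hD : Convex ℝ D) (hhypo : Convex ℝ (hypographOn D φ))
    (hcont : ContinuousOn φ D) {x : X} (hx : x ∈ D) (hx_top : φ x = ⊤) : ∀ y ∈ D, φ y = ⊤ :=
  fun _ hy => eq_top_of_convex_hypographOn_of_ne_bot hD hhypo hcont hx hx_top hy
    (ne_bot_of_convex_hypographOn hD hhypo hcont hx hx_top hy)

theorem eq_bot_of_convex_epigraphOn (hD : Convex ℝ D) (hepi : Convex ℝ (epigraphOn D φ))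
    (hcont : ContinuousOn φ D) {x : X} (hx : x ∈ D) (hx_bot : φ x = ⊥) : ∀ y ∈ D, φ y = ⊥ := by
  intro y hy
  simpa using eq_top_of_convex_hypographOn hD (convex_hypographOn_neg hepi)
    (continuous_neg.comp_continuousOn hcont) hx (by simp [hx_bot]) y hy

end

theorem affine_continuousOn_constant_or_proper_general {X : Type*} [AddCommGroup X] [Module ℝ X]
    [TopologicalSpace X] [IsTopologicalAddGroup X] [ContinuousSMul ℝ X]
    (D : Set X) (φ : X → EReal)
    (hDconv : Convex ℝ D)
    (hepi : Convex ℝ {p : X × ℝ | p.1 ∈ D ∧ φ p.1 ≤ (p.2 : EReal)})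
    (hhypo : Convex ℝ {p : X × ℝ | p.1 ∈ D ∧ (p.2 : EReal) ≤ φ p.1})
    (hcont : ContinuousOn φ D) :
    (∃ c : EReal, ∀ x ∈ D, φ x = c) ∨ (∀ x ∈ D, φ x ≠ ⊥ ∧ φ x ≠ ⊤) := by
  by_cases htop : ∃ x ∈ D, φ x = ⊤
  · obtain ⟨x, hx, hx_top⟩ := htop
    exact .inl ⟨⊤, eq_top_of_convex_hypographOn hDconv hhypo hcont hx hx_top⟩
  by_cases hbot : ∃ x ∈ D, φ x = ⊥
  · obtain ⟨x, hx, hx_bot⟩ := hbot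
    exact .inl ⟨⊥, eq_bot_of_convex_epigraphOn hDconv hepi hcont hx hx_bot⟩
  exact .inr fun x hx => ⟨fun h => hbot ⟨x, hx, h⟩, fun h => htop ⟨x, hx, h⟩⟩

/-- An affine function (convex and concave) which is continuous on its effective
domain is constant on its domain or proper (finite-valued on the domain). -/
theorem affine_continuousOn_constant_or_proper {X : Type*} [AddCommGroup X] [Module ℝ X]
    [TopologicalSpace X] [IsTopologicalAddGroup X] [ContinuousSMul ℝ X]
    (D : Set X) (hD : D.Nonempty) (φ : X → EReal)
    (hDconv : Convex ℝ D)
    (hepi : Convex ℝ {p : X × ℝ | p.1 ∈ D ∧ φ p.1 ≤ (p.2 : EReal)})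
    (hhypo : Convex ℝ {p : X × ℝ | p.1 ∈ D ∧ (p.2 : EReal) ≤ φ p.1})
    (hcont : ContinuousOn φ D) :
    (∃ c : EReal, ∀ x ∈ D, φ x = c) ∨ (∀ x ∈ D, φ x ≠ ⊥ ∧ φ x ≠ ⊤) :=
  affine_continuousOn_constant_or_proper_general D φ hDconv hepi hhypo hcont
end

section
/- Let X be a real topological vector space and φ : X → EReal a continuous function (with respect to the order topology on EReal). If φ is linear in the sense that epi φ and hypo φ are convex sets and φ(0) = 0, then φ is finite-valued: φ(x) ≠ −∞ and φ(x) ≠ +∞ for every x ∈ X. -/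
/-!
If `φ x = ⊤`, then `(x, s) ∈ hypo φ` for every real `s`; since `(0, 0) ∈ hypo φ`, convexity gives
`(t • x, t * s) ∈ hypo φ` for `t ∈ (0, 1]`, so `φ (t • x) = ⊤` on that interval. Letting `t → 0⁺`,
continuity at `0` forces `φ 0 = ⊤`, contradicting `φ 0 = 0`. The value `⊥` is excluded by the
same argument applied to `-φ`, whose hypograph is a linear preimage of `epi φ`.
-/

open Set Filter Topology

section

variable {X : Type*} [AddCommGroup X] [Module ℝ X] {φ : X → EReal}

theorem eq_top_smul_of_convex_hypograph
    (hhypo : Convex ℝ {p : X × ℝ | (p.2 : EReal) ≤ φ p.1}) (h0 : 0 ≤ φ 0)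
    {x : X} (hx : φ x = ⊤) {t : ℝ} (ht : t ∈ Ioc 0 1) : φ (t • x) = ⊤ := by
  rw [EReal.eq_top_iff_forall_lt]
  intro y
  have hmem : t • ((x, (y + 1) / t) : X × ℝ) ∈ {p : X × ℝ | (p.2 : EReal) ≤ φ p.1} :=
    hhypo.smul_mem_of_zero_mem (by simpa using h0) (by simp [hx]) (Ioc_subset_Icc_self ht)
  have hty : t * ((y + 1) / t) = y + 1 := by field_simp [ht.1.ne']
  simp only [Prod.smul_mk, smul_eq_mul, hty, mem_ofPred_eq] at hmem
  exact lt_of_lt_of_le (EReal.coe_lt_coe_iff.mpr (lt_add_one y)) hmem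

theorem convex_hypograph_neg (hepi : Convex ℝ {p : X × ℝ | φ p.1 ≤ (p.2 : EReal)}) :
    Convex ℝ {p : X × ℝ | (p.2 : EReal) ≤ -φ p.1} := by
  have hpre : {p : X × ℝ | (p.2 : EReal) ≤ -φ p.1} =
      ((LinearMap.id : X →ₗ[ℝ] X).prodMap (-LinearMap.id : ℝ →ₗ[ℝ] ℝ)) ⁻¹'
        {p : X × ℝ | φ p.1 ≤ (p.2 : EReal)} := by
    ext ⟨x, s⟩
    simp [EReal.le_neg]
  exact hpre ▸ hepi.linear_preimage _

variable [TopologicalSpace X] [ContinuousSMul ℝ X]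

theorem ne_top_of_convex_hypograph (hcont : ContinuousAt φ 0)
    (hhypo : Convex ℝ {p : X × ℝ | (p.2 : EReal) ≤ φ p.1}) (h0 : 0 ≤ φ 0) (h0_ne_top : φ 0 ≠ ⊤)
    (x : X) : φ x ≠ ⊤ := by
  intro hx
  have hlim : Tendsto (fun t : ℝ => φ (t • x)) (𝓝[>] 0) (𝓝 (φ 0)) := by
    have hsmul : Tendsto (fun t : ℝ => t • x) (𝓝[>] 0) (𝓝 0) :=
      ((continuous_id.smul continuous_const).tendsto' 0 0 (zero_smul ℝ x)).mono_left
        nhdsWithin_le_nhds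
    exact hcont.tendsto.comp hsmul
  have htop : (fun t : ℝ => φ (t • x)) =ᶠ[𝓝[>] 0] fun _ => ⊤ := by
    filter_upwards [Ioc_mem_nhdsGT (zero_lt_one' ℝ)] with t ht
    exact eq_top_smul_of_convex_hypograph hhypo h0 hx ht
  exact h0_ne_top (tendsto_nhds_unique hlim (tendsto_const_nhds.congr' htop.symm))

end

theorem continuous_linear_finite_general {X : Type*} [AddCommGroup X] [Module ℝ X]
    [TopologicalSpace X] [ContinuousSMul ℝ X]
    (φ : X → EReal) (hcont : Continuous φ)
    (hepi : Convex ℝ {p : X × ℝ | φ p.1 ≤ (p.2 : EReal)})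
    (hhypo : Convex ℝ {p : X × ℝ | (p.2 : EReal) ≤ φ p.1})
    (h0 : φ 0 = 0) :
    ∀ x : X, φ x ≠ ⊥ ∧ φ x ≠ ⊤ := by
  intro x
  refine ⟨fun hx => ?_,
    ne_top_of_convex_hypograph hcont.continuousAt hhypo h0.ge (by simp [h0]) x⟩
  have h_neg := ne_top_of_convex_hypograph (φ := fun y => -φ y)
    (continuous_neg.comp hcont).continuousAt (convex_hypograph_neg hepi)
    (by simp [h0]) (by simp [h0]) x
  simp [hx] at h_neg

/-- A continuous linear extended real-valued function on a topological vector
space is finite-valued. -/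
theorem continuous_linear_finite {X : Type*} [AddCommGroup X] [Module ℝ X]
    [TopologicalSpace X] [IsTopologicalAddGroup X] [ContinuousSMul ℝ X]
    (φ : X → EReal) (hcont : Continuous φ)
    (hepi : Convex ℝ {p : X × ℝ | φ p.1 ≤ (p.2 : EReal)})
    (hhypo : Convex ℝ {p : X × ℝ | (p.2 : EReal) ≤ φ p.1})
    (h0 : φ 0 = 0) :
    ∀ x : X, φ x ≠ ⊥ ∧ φ x ≠ ⊤ :=
  continuous_linear_finite_general φ hcont hepi hhypo h0
end

section
/- Let X be a real vector space and φ : X → EReal be defined on all of X. Then φ is linear (epi φ and hypo φ are convex sets and φ(0) = 0) if and only if φ is homogeneous and additive, i.e.: epi φ is a nonempty cone (closed under multiplication by nonnegative real scalars in X × ℝ), φ(−x) = −φ(x) for all x ∈ X, epi φ + epi φ ⊆ epi φ, and hypo φ + hypo φ ⊆ hypo φ. -/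
/-! Convex sets containing the origin are closed under scaling by `c ∈ [0, 1]`. For the epigraph
this extends to `c > 1` by playing it against the hypograph: if `c • (x, t)` left `epi φ`, some
`(c • x, u)` with `c * t < u` would lie in `hypo φ`, and scaling back by `c⁻¹` would put `(x, u / c)`
in `hypo φ` strictly above `(x, t) ∈ epi φ`. A set closed under nonnegative scaling is convex iff
it is closed under addition. Midpoints of `(x, t)` and `(-x, u)` lie over `0`, where `φ` vanishes;
this forces `φ (-x) = -φ x`, and then `hypo φ = -epi φ` transports everything from the epigraph to
the hypograph. -/

open Pointwise

theorem convex_iff_add_self_subset_of_smul_mem {𝕜 E : Type*} [Field 𝕜] [LinearOrder 𝕜]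
    [IsStrictOrderedRing 𝕜] [AddCommMonoid E] [Module 𝕜 E] {s : Set E}
    (hsmul : ∀ c : 𝕜, 0 ≤ c → ∀ x ∈ s, c • x ∈ s) : Convex 𝕜 s ↔ s + s ⊆ s := by
  refine ⟨fun hs => ?_, fun hadd => ?_⟩
  · rintro _ ⟨x, hx, y, hy, rfl⟩
    have hmid : (1 / 2 : 𝕜) • x + (1 / 2 : 𝕜) • y ∈ s :=
      hs hx hy (by positivity) (by positivity) (add_halves 1)
    simpa [smul_add, smul_smul] using hsmul 2 zero_le_two _ hmid
  · exact (⟨s, fun c hc x hx => hsmul c hc.le x hx, fun x hx y hy => hadd (Set.add_mem_add hx hy)⟩ :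
      ConvexCone 𝕜 E).convex

theorem Convex.mk_zero_add_div_two_mem {𝕜 X : Type*} [Field 𝕜] [LinearOrder 𝕜]
    [IsStrictOrderedRing 𝕜] [AddCommGroup X] [Module 𝕜 X] {s : Set (X × 𝕜)} (hs : Convex 𝕜 s)
    {x : X} {t u : 𝕜} (ht : (x, t) ∈ s) (hu : (-x, u) ∈ s) : (0, (t + u) / 2) ∈ s := by
  convert hs ht hu (a := 1 / 2) (b := 1 / 2) (by positivity) (by positivity) (add_halves 1) using 1
  ext
  · simp
  · simp only [Prod.smul_mk, smul_eq_mul, Prod.mk_add_mk]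
    ring

section

variable {X : Type*} {φ : X → EReal}

def epi (φ : X → EReal) : Set (X × ℝ) := {p | φ p.1 ≤ (p.2 : EReal)}

def hypo (φ : X → EReal) : Set (X × ℝ) := {p | (p.2 : EReal) ≤ φ p.1}

@[simp] theorem mem_epi {p : X × ℝ} : p ∈ epi φ ↔ φ p.1 ≤ p.2 := Iff.rfl

@[simp] theorem mem_hypo {p : X × ℝ} : p ∈ hypo φ ↔ (p.2 : EReal) ≤ φ p.1 := Iff.rfl

variable [AddCommGroup X]

theorem zero_mem_epi (h0 : φ 0 = 0) : (0 : X × ℝ) ∈ epi φ := by simp [h0]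

theorem zero_mem_hypo (h0 : φ 0 = 0) : (0 : X × ℝ) ∈ hypo φ := by simp [h0]

theorem hypo_eq_neg_epi (hodd : ∀ x, φ (-x) = -φ x) : hypo φ = -epi φ := by
  ext p
  simp [hodd, EReal.neg_le_neg_iff]

theorem odd_of_neg_mem (hE : ∀ p ∈ epi φ, -p ∈ hypo φ) (hH : ∀ p ∈ hypo φ, -p ∈ epi φ) (x : X) :
    φ (-x) = -φ x := by
  refine le_antisymm ?_ ?_
  · rw [EReal.le_neg]
    refine EReal.ge_of_forall_gt_iff_ge.1 fun t ht => ?_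
    rw [EReal.le_neg, ← EReal.coe_neg]
    exact hH (x, t) ht.le
  · rw [EReal.neg_le]
    refine EReal.le_of_forall_lt_iff_le.1 fun t ht => ?_
    rw [EReal.neg_le, ← EReal.coe_neg]
    exact hE (x, t) ht.le

variable [Module ℝ X]

theorem smul_mem_epi_of_convex (hE : Convex ℝ (epi φ)) (hH : Convex ℝ (hypo φ)) (h0 : φ 0 = 0)
    {c : ℝ} (hc : 0 ≤ c) {p : X × ℝ} (hp : p ∈ epi φ) : c • p ∈ epi φ := by
  rcases le_or_gt c 1 with hc1 | hc1
  · exact hE.smul_mem_of_zero_mem (zero_mem_epi h0) hp ⟨hc, hc1⟩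
  by_contra hcp
  obtain ⟨u, hcu, hu⟩ := EReal.exists_between_coe_real (not_le.1 hcp)
  have hscaled : (p.1, c⁻¹ * u) ∈ hypo φ := by
    simpa [smul_smul, inv_mul_cancel₀ (by positivity : c ≠ 0)] using
      hH.smul_mem_of_zero_mem (zero_mem_hypo h0) (show (c • p.1, u) ∈ hypo φ from hu.le)
        ⟨by positivity, inv_le_one_of_one_le₀ hc1.le⟩
  have hlt : c * p.2 < u := by exact_mod_cast hcu
  have hle : c⁻¹ * u ≤ p.2 := by exact_mod_cast (mem_hypo.1 hscaled).trans hp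
  rw [inv_mul_le_iff₀ (by positivity)] at hle
  exact hlt.not_ge hle

theorem neg_mem_hypo_of_mem_epi (hE : Convex ℝ (epi φ)) (h0 : φ 0 = 0) {p : X × ℝ}
    (hp : p ∈ epi φ) : -p ∈ hypo φ := by
  refine EReal.le_of_forall_lt_iff_le.1 fun u hu => ?_
  have hmid := hE.mk_zero_add_div_two_mem hp (show (-p.1, u) ∈ epi φ from hu.le)
  simp only [mem_epi, h0] at hmid
  have hmid : (0 : ℝ) ≤ (p.2 + u) / 2 := by exact_mod_cast hmid
  simp only [Prod.snd_neg, EReal.coe_neg]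
  exact_mod_cast (by linarith : -p.2 ≤ u)

theorem neg_mem_epi_of_mem_hypo (hH : Convex ℝ (hypo φ)) (h0 : φ 0 = 0) {p : X × ℝ}
    (hp : p ∈ hypo φ) : -p ∈ epi φ := by
  refine EReal.ge_of_forall_gt_iff_ge.1 fun u hu => ?_
  have hmid := hH.mk_zero_add_div_two_mem hp (show (-p.1, u) ∈ hypo φ from hu.le)
  simp only [mem_hypo, h0] at hmid
  have hmid : (p.2 + u) / 2 ≤ (0 : ℝ) := by exact_mod_cast hmid
  simp only [Prod.snd_neg, EReal.coe_neg]
  exact_mod_cast (by linarith : u ≤ -p.2)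

end

/-- An extended real-valued function on the whole space is linear (epigraph and
hypograph convex, `φ 0 = 0`) iff it is homogeneous (epigraph a nonempty cone and
`φ` odd) and additive (epigraph and hypograph closed under Minkowski addition). -/
theorem linear_iff_homogeneous_additive {X : Type*} [AddCommGroup X] [Module ℝ X]
    (φ : X → EReal) :
    (Convex ℝ {p : X × ℝ | φ p.1 ≤ (p.2 : EReal)} ∧
      Convex ℝ {p : X × ℝ | (p.2 : EReal) ≤ φ p.1} ∧ φ 0 = 0) ↔
    ({p : X × ℝ | φ p.1 ≤ (p.2 : EReal)}.Nonempty ∧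
      (∀ l : ℝ, 0 ≤ l → ∀ p ∈ {p : X × ℝ | φ p.1 ≤ (p.2 : EReal)},
        l • p ∈ {p : X × ℝ | φ p.1 ≤ (p.2 : EReal)}) ∧
      (∀ x : X, φ (-x) = -φ x) ∧
      ({p : X × ℝ | φ p.1 ≤ (p.2 : EReal)} + {p : X × ℝ | φ p.1 ≤ (p.2 : EReal)} ⊆
        {p : X × ℝ | φ p.1 ≤ (p.2 : EReal)}) ∧
      ({p : X × ℝ | (p.2 : EReal) ≤ φ p.1} + {p : X × ℝ | (p.2 : EReal) ≤ φ p.1} ⊆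
        {p : X × ℝ | (p.2 : EReal) ≤ φ p.1})) := by
  change (Convex ℝ (epi φ) ∧ Convex ℝ (hypo φ) ∧ φ 0 = 0) ↔ ((epi φ).Nonempty ∧
    (∀ l : ℝ, 0 ≤ l → ∀ p ∈ epi φ, l • p ∈ epi φ) ∧ (∀ x, φ (-x) = -φ x) ∧
    epi φ + epi φ ⊆ epi φ ∧ hypo φ + hypo φ ⊆ hypo φ)
  constructor
  · rintro ⟨hE, hH, h0⟩
    have hcone : ∀ l : ℝ, 0 ≤ l → ∀ p ∈ epi φ, l • p ∈ epi φ :=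
      fun l hl p hp => smul_mem_epi_of_convex hE hH h0 hl hp
    have hodd := odd_of_neg_mem (fun _ => neg_mem_hypo_of_mem_epi hE h0)
      (fun _ => neg_mem_epi_of_mem_hypo hH h0)
    have haddE := (convex_iff_add_self_subset_of_smul_mem hcone).1 hE
    refine ⟨⟨0, zero_mem_epi h0⟩, hcone, hodd, haddE, ?_⟩
    rw [hypo_eq_neg_epi hodd, ← neg_add]
    exact Set.neg_subset_neg.2 haddE
  · rintro ⟨⟨p, hp⟩, hcone, hodd, haddE, -⟩
    have h0 : φ 0 = 0 := by
      have hle : φ 0 ≤ 0 := by simpa using hcone 0 le_rfl p hp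
      have hneg := hodd 0
      rw [neg_zero] at hneg
      exact le_antisymm hle (hneg ▸ EReal.neg_nonneg.2 hle)
    have hE := (convex_iff_add_self_subset_of_smul_mem hcone).2 haddE
    exact ⟨hE, hypo_eq_neg_epi hodd ▸ hE.neg, h0⟩
end

section
/- Let X be a real topological vector space and φ : X → EReal a continuous function (with respect to the order topology on EReal). Then φ is linear (epi φ and hypo φ are convex sets and φ(0) = 0) if and only if φ is additive (epi φ + epi φ ⊆ epi φ and hypo φ + hypo φ ⊆ hypo φ) and φ(0) = 0. -/
/-!
If the hypograph of `φ` is stable under scaling by `c > 0`, its epigraph is stable under `c⁻¹`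
(and symmetrically): were `φ (c⁻¹ • x) > c⁻¹ * t ≥ c⁻¹ * φ x`, scaling a hypograph point over
`c⁻¹ • x` above level `c⁻¹ * t` would give a hypograph point over `x` above level `t`.
Linearity gives stability under `2⁻¹` (convexity through the origin), additivity stability under
`2` (as `p + p = 2 • p`), so either way both sets are stable under `2` and `2⁻¹`. Convexity with
doubling yields additivity; additivity with halving yields midpoint convexity, which is convexity
for the closed sets that continuity of `φ` provides.
-/

open Pointwise Set

theorem Icc_subset_of_isClosed_of_midpoint_mem {D : Set ℝ} (hD : IsClosed D) {x y : ℝ}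
    (hx : x ∈ D) (hy : y ∈ D) (hmid : ∀ a ∈ D, ∀ b ∈ D, midpoint ℝ a b ∈ D) :
    Icc x y ⊆ D := by
  intro a ha
  by_contra haD
  obtain ⟨b, ⟨hbD, hb⟩, hb_max⟩ :=
    (isCompact_Icc.inter_left hD).exists_isGreatest ⟨x, hx, le_rfl, ha.1⟩
  obtain ⟨c, ⟨hcD, hc⟩, hc_min⟩ :=
    (isCompact_Icc.inter_left hD).exists_isLeast ⟨y, hy, ha.2, le_rfl⟩
  have hba : b < a := hb.2.lt_of_ne fun h => haD (h ▸ hbD)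
  have hac : a < c := hc.1.lt_of_ne fun h => haD (h ▸ hcD)
  have hm : midpoint ℝ b c = (b + c) / 2 := by
    rw [midpoint_eq_smul_add, invOf_eq_inv, smul_eq_mul]; ring
  have hmD := hmid b hbD c hcD
  rcases le_total (midpoint ℝ b c) a with h | h
  · have := hb_max ⟨hmD, hb.1.trans (by linarith), h⟩
    linarith
  · have := hc_min ⟨hmD, h, (by linarith : midpoint ℝ b c ≤ c).trans hc.2⟩
    linarith

section

variable {E : Type*} [AddCommGroup E] [Module ℝ E] [TopologicalSpace E]
  [IsTopologicalAddGroup E] [ContinuousSMul ℝ E] {S : Set E}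

theorem IsClosed.convex_of_midpoint_mem (hS : IsClosed S)
    (hmid : ∀ x ∈ S, ∀ y ∈ S, midpoint ℝ x y ∈ S) : Convex ℝ S := by
  refine convex_iff_segment_subset.mpr fun x hx y hy => ?_
  rw [segment_eq_image_lineMap, image_subset_iff]
  refine Icc_subset_of_isClosed_of_midpoint_mem (hS.preimage AffineMap.lineMap_continuous)
    (by simpa using hx) (by simpa using hy) fun a ha b hb => ?_
  rw [mem_preimage, AffineMap.map_midpoint]
  exact hmid _ ha _ hb

theorem IsClosed.convex_of_add_subset (hS : IsClosed S) (hadd : S + S ⊆ S)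
    (hhalf : ∀ p ∈ S, (2 : ℝ)⁻¹ • p ∈ S) : Convex ℝ S :=
  hS.convex_of_midpoint_mem fun x hx y hy => by
    rw [midpoint_eq_smul_add, invOf_eq_inv]
    exact hhalf _ (hadd (add_mem_add hx hy))

end

theorem Convex.add_subset_self {𝕜 E : Type*} [Field 𝕜] [LinearOrder 𝕜] [IsStrictOrderedRing 𝕜]
    [AddCommGroup E] [Module 𝕜 E] {S : Set E} (hS : Convex 𝕜 S)
    (htwo : ∀ p ∈ S, (2 : 𝕜) • p ∈ S) : S + S ⊆ S := by
  rintro _ ⟨p, hp, q, hq, rfl⟩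
  have hmid : (2 : 𝕜)⁻¹ • p + (2 : 𝕜)⁻¹ • q ∈ S :=
    hS hp hq (by positivity) (by positivity) (by ring)
  simpa [← smul_add, smul_smul] using htwo _ hmid

section

variable {X : Type*}

def epigraph (φ : X → EReal) : Set (X × ℝ) := {p | φ p.1 ≤ p.2}

def hypograph (φ : X → EReal) : Set (X × ℝ) := {p | (p.2 : EReal) ≤ φ p.1}

theorem inv_smul_mem_epigraph [MulAction ℝ X] {φ : X → EReal} {c : ℝ} (hc : 0 < c)
    (hH : ∀ p ∈ hypograph φ, c • p ∈ hypograph φ) {p : X × ℝ} (hp : p ∈ epigraph φ) :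
    c⁻¹ • p ∈ epigraph φ := by
  obtain ⟨x, t⟩ := p
  by_contra h
  obtain ⟨s, hts, hs⟩ := EReal.exists_between_coe_real (not_le.mp h)
  have hcs : ((c * s : ℝ) : EReal) ≤ φ x := by
    simpa [hypograph, hc.ne'] using hH (c⁻¹ • x, s) hs.le
  have hst : c * s ≤ t := EReal.coe_le_coe_iff.mp (hcs.trans hp)
  have hlt : c⁻¹ * t < s := EReal.coe_lt_coe_iff.mp hts
  rw [inv_mul_lt_iff₀ hc] at hlt
  linarith

theorem inv_smul_mem_hypograph [MulAction ℝ X] {φ : X → EReal} {c : ℝ} (hc : 0 < c)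
    (hE : ∀ p ∈ epigraph φ, c • p ∈ epigraph φ) {p : X × ℝ} (hp : p ∈ hypograph φ) :
    c⁻¹ • p ∈ hypograph φ := by
  obtain ⟨x, t⟩ := p
  by_contra h
  obtain ⟨s, hs, hts⟩ := EReal.exists_between_coe_real (not_le.mp h)
  have hcs : φ x ≤ ((c * s : ℝ) : EReal) := by
    simpa [epigraph, hc.ne'] using hE (c⁻¹ • x, s) hs.le
  have hst : t ≤ c * s := EReal.coe_le_coe_iff.mp (hp.trans hcs)
  have hlt : s < c⁻¹ * t := EReal.coe_lt_coe_iff.mp hts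
  rw [lt_inv_mul_iff₀ hc] at hlt
  linarith

theorem isClosed_epigraph [TopologicalSpace X] {φ : X → EReal} (hφ : Continuous φ) :
    IsClosed (epigraph φ) :=
  isClosed_le (hφ.comp continuous_fst) (continuous_coe_real_ereal.comp continuous_snd)

theorem isClosed_hypograph [TopologicalSpace X] {φ : X → EReal} (hφ : Continuous φ) :
    IsClosed (hypograph φ) :=
  isClosed_le (continuous_coe_real_ereal.comp continuous_snd) (hφ.comp continuous_fst)

end

/-- A continuous extended real-valued function on a topological vector space is
linear (epigraph and hypograph convex, `φ 0 = 0`) iff it is additive and `φ 0 = 0`. -/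
theorem continuous_linear_iff_additive {X : Type*} [AddCommGroup X] [Module ℝ X]
    [TopologicalSpace X] [IsTopologicalAddGroup X] [ContinuousSMul ℝ X]
    (φ : X → EReal) (hcont : Continuous φ) :
    (Convex ℝ {p : X × ℝ | φ p.1 ≤ (p.2 : EReal)} ∧
      Convex ℝ {p : X × ℝ | (p.2 : EReal) ≤ φ p.1} ∧ φ 0 = 0) ↔
    (({p : X × ℝ | φ p.1 ≤ (p.2 : EReal)} + {p : X × ℝ | φ p.1 ≤ (p.2 : EReal)} ⊆
        {p : X × ℝ | φ p.1 ≤ (p.2 : EReal)}) ∧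
      ({p : X × ℝ | (p.2 : EReal) ≤ φ p.1} + {p : X × ℝ | (p.2 : EReal) ≤ φ p.1} ⊆
        {p : X × ℝ | (p.2 : EReal) ≤ φ p.1}) ∧ φ 0 = 0) := by
  change (Convex ℝ (epigraph φ) ∧ Convex ℝ (hypograph φ) ∧ φ 0 = 0) ↔
    (epigraph φ + epigraph φ ⊆ epigraph φ ∧ hypograph φ + hypograph φ ⊆ hypograph φ ∧ φ 0 = 0)
  constructor
  · rintro ⟨hE, hH, h0⟩
    have halfE : ∀ p ∈ epigraph φ, (2 : ℝ)⁻¹ • p ∈ epigraph φ := fun p hp =>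
      hE.smul_mem_of_zero_mem (by simp [epigraph, h0]) hp ⟨by norm_num, by norm_num⟩
    have halfH : ∀ p ∈ hypograph φ, (2 : ℝ)⁻¹ • p ∈ hypograph φ := fun p hp =>
      hH.smul_mem_of_zero_mem (by simp [hypograph, h0]) hp ⟨by norm_num, by norm_num⟩
    refine ⟨hE.add_subset_self fun p hp => ?_, hH.add_subset_self fun p hp => ?_, h0⟩
    · simpa using inv_smul_mem_epigraph (by norm_num) halfH hp
    · simpa using inv_smul_mem_hypograph (by norm_num) halfE hp
  · rintro ⟨hE, hH, h0⟩
    have twoE : ∀ p ∈ epigraph φ, (2 : ℝ) • p ∈ epigraph φ := fun p hp =>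
      two_smul ℝ p ▸ hE (add_mem_add hp hp)
    have twoH : ∀ p ∈ hypograph φ, (2 : ℝ) • p ∈ hypograph φ := fun p hp =>
      two_smul ℝ p ▸ hH (add_mem_add hp hp)
    exact ⟨(isClosed_epigraph hcont).convex_of_add_subset hE
        fun p hp => inv_smul_mem_epigraph two_pos twoH hp,
      (isClosed_hypograph hcont).convex_of_add_subset hH
        fun p hp => inv_smul_mem_hypograph two_pos twoE hp, h0⟩
end
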